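/- Let $(X_1, C_1, u_1)$ and $(X_2, C_2, u_2)$ be order unit spaces with strictly positive states $\varphi_1, \varphi_2$ and cross sections $\Sigma_i = \{x \in C_i^\circ : \varphi_i(x) = 1\}$. Let $x, y \in \Sigma_1$ be distinct and let $x', y'$ in the relative boundary of $\Sigma_1$ be the endpoints of $\ell_{xy} \cap \Sigma_1$ with $x$ between $x'$ and $y$, and $y$ between $y'$ and $x$. Suppose $f : (\Sigma_1, d_H) \to (\Sigma_2, d_H)$ is an isometry that maps line segments to line segments, and let $f(x)', f(y)'$ be the endpoints of $\ell_{f(x) f(y)} \cap \Sigma_2$ with $f(x)$ between $f(x)'$ and $f(y)$, and $f(y)$ between $f(y)'$ and $f(x)$. Then there exists a linear map $S : \mathrm{Span}\{x', y'\} \to \mathrm{Span}\{f(x)', f(y)'\}$ such that $Sx' / \varphi_2(Sx') = f(x)'$, $Sy' / \varphi_2(Sy') = f(y)'$, $Sz / \varphi_2(Sz) = f(z)$ for all $z$ in the open segment $(x', y')$, and $S$ is bi-positive with respect to the cones $C_1 \cap \mathrm{Span}\{x', y'\}$ and $C_2 \cap \mathrm{Span}\{f(x)', f(y)'\}$. 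-/

import Mathlib

namespace HilbertGeom

/-- An order unit space: a real vector space with an Archimedean cone `C` and order unit `u`. -/
structure OrderUnitSpace (X : Type*) [AddCommGroup X] [Module ℝ X] where
  C : Set X
  u : X
  convex : Convex ℝ C
  smul_mem : ∀ ⦃c : ℝ⦄, 0 ≤ c → ∀ ⦃x : X⦄, x ∈ C → c • x ∈ C
  salient : ∀ ⦃x : X⦄, x ∈ C → -x ∈ C → x = 0
  archimedean : ∀ x y : X, y ∈ C → (∀ n : ℕ, 0 < n → y - (n : ℝ) • x ∈ C) → -x ∈ C
  u_mem : u ∈ C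
  orderUnit : ∀ x : X, ∃ c : ℝ, 0 < c ∧ c • u - x ∈ C

namespace OrderUnitSpace

variable {X : Type*} [AddCommGroup X] [Module ℝ X] (S : OrderUnitSpace X)

/-- The order unit norm `‖x‖_u = inf {c > 0 : -c•u ≤ x ≤ c•u}`. -/
noncomputable def onorm (x : X) : ℝ :=
  sInf {c : ℝ | 0 < c ∧ c • S.u - x ∈ S.C ∧ c • S.u + x ∈ S.C}

/-- The interior of the cone `C` with respect to the order unit norm. -/
def interiorC : Set X :=
  {x : X | ∃ ε > 0, ∀ y : X, S.onorm (y - x) < ε → y ∈ S.C}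

/-- `M(x/y) = inf {β > 0 : x ≤_C β y}`. -/
noncomputable def M (x y : X) : ℝ := sInf {c : ℝ | 0 < c ∧ c • y - x ∈ S.C}

/-- Birkhoff's version of Hilbert's metric. -/
noncomputable def dH (x y : X) : ℝ := Real.log (S.M x y * S.M y x)

/-- `φ` is a state: a linear functional with `φ u = 1`. -/
def IsState (φ : X →ₗ[ℝ] ℝ) : Prop := φ S.u = 1

/-- `φ` is strictly positive: `φ(C \ {0}) ⊆ (0, ∞)`. -/
def StrictlyPos (φ : X →ₗ[ℝ] ℝ) : Prop := ∀ x ∈ S.C, x ≠ 0 → 0 < φ x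

/-- The cross section `Σ_φ = {x ∈ C° : φ x = 1}`. -/
def Sig (φ : X →ₗ[ℝ] ℝ) : Set X := {x | x ∈ S.interiorC ∧ φ x = 1}

/-- `z` lies in the closure of `A` with respect to the order unit norm. -/
def InClosure (A : Set X) (z : X) : Prop := ∀ ε > 0, ∃ w ∈ A, S.onorm (w - z) < ε

/-- The relative boundary of `Σ_φ` (in the affine hyperplane `φ = 1`, w.r.t. the order
unit norm): since `Σ_φ` is relatively open this is its closure minus itself. -/
def relBoundary (φ : X →ₗ[ℝ] ℝ) : Set X :=
  {z : X | S.InClosure (S.Sig φ) z ∧ z ∉ S.Sig φ}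

/-- The straight line through `x` and `y`. -/
def lineThrough (x y : X) : Set X := {z : X | ∃ t : ℝ, z = x + t • (y - x)}

end OrderUnitSpace

end HilbertGeom

/-!
On a chord `(a, b)` of the cross section with `a`, `b` in its relative boundary, the cone meets
`span {a, b}` exactly in the quadrant spanned by `a` and `b`: a vector of the cone with a
negative coefficient would make one endpoint a positive combination of an interior point of the
chord and a point of the cone, hence interior. Consequently Hilbert's metric along the chord is
`|logit s - logit t|` in the affine parameter of `lineMap a b`.

Since `f` maps segments onto segments, it maps the chord `(x', y')` into the line through
`f x` and `f y`, hence into the chord `(f(x)', f(y)')`. In logit coordinates `f` is then an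
isometry of `ℝ` which, by the position of `x` between `x'` and `y`, preserves orientation; so it
is a translation by some `log k`, i.e. `t ↦ t k / (1 - t + t k)` in affine parameters. This is
the projective action of the linear map `x' ↦ f(x)'`, `y' ↦ k f(y)'`, which maps the quadrant of
`x', y'` onto the quadrant of `f(x)', f(y)'`.
-/

namespace HilbertGeom

open AffineMap Set

lemma log_max_mul_max_inv {p q : ℝ} (hp : 0 < p) (hq : 0 < q) :
    Real.log (max p q * max p⁻¹ q⁻¹) = |Real.log p - Real.log q| := by
  wlog h : q ≤ p generalizing p q
  · rw [max_comm, max_comm p⁻¹, this hq hp (le_of_not_ge h), abs_sub_comm]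
  rw [max_eq_left h, max_eq_right ((inv_le_inv₀ hp hq).mpr h), Real.log_mul hp.ne'
    (inv_ne_zero hq.ne'), Real.log_inv, ← sub_eq_add_neg,
    abs_of_nonneg (sub_nonneg.mpr (Real.log_le_log hq h))]

noncomputable def logit (r : ℝ) : ℝ := Real.log (r / (1 - r))

lemma logit_strictMonoOn : StrictMonoOn logit (Ioo 0 1) := by
  rintro s ⟨hs₀, hs₁⟩ t ⟨ht₀, ht₁⟩ hst
  refine Real.log_lt_log (div_pos hs₀ (sub_pos.mpr hs₁)) ?_
  rw [div_lt_div_iff₀ (sub_pos.mpr hs₁) (sub_pos.mpr ht₁)]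
  nlinarith

lemma eq_div_of_logit_eq_logit_add_log {r t k : ℝ} (hr : r ∈ Ioo 0 1) (ht : t ∈ Ioo 0 1)
    (hk : 0 < k) (h : logit r = logit t + Real.log k) : r = t * k / (1 - t + t * k) := by
  obtain ⟨hr₀, hr₁⟩ := hr
  obtain ⟨ht₀, ht₁⟩ := ht
  have hr' : 0 < 1 - r := sub_pos.mpr hr₁
  have ht' : 0 < 1 - t := sub_pos.mpr ht₁
  rw [logit, logit, ← Real.log_mul (by positivity) hk.ne'] at h
  have := Real.log_injOn_pos (div_pos hr₀ hr') (by positivity : 0 < t / (1 - t) * k) h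
  rw [eq_div_iff (by nlinarith)]
  field_simp at this
  linarith

/-- Three points of a line determine an isometry of it together with its orientation. -/
lemma sub_eq_sub_of_abs_sub_eq_abs_sub {a₀ a₁ a b₀ b₁ b : ℝ} (ha : a₀ < a₁) (hb : b₀ < b₁)
    (h₀₁ : |b₁ - b₀| = |a₁ - a₀|) (h₀ : |b - b₀| = |a - a₀|) (h₁ : |b - b₁| = |a - a₁|) :
    b - b₀ = a - a₀ := by
  rw [abs_of_pos (sub_pos.mpr ha), abs_of_pos (sub_pos.mpr hb)] at h₀₁
  have h₀' := congrArg (· ^ 2) h₀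
  have h₁' := congrArg (· ^ 2) h₁
  simp only [sq_abs] at h₀' h₁'
  refine mul_left_cancel₀ (sub_pos.mpr ha).ne' ?_
  linear_combination (h₀' - h₁') / 2 - (b - b₀ - (b₁ - b₀ + a₁ - a₀) / 2) * h₀₁

lemma exists_pos_eq_div_of_isometry_logit {g : ℝ → ℝ} (hg : MapsTo g (Ioo 0 1) (Ioo 0 1))
    (hiso : ∀ s ∈ Ioo (0 : ℝ) 1, ∀ t ∈ Ioo (0 : ℝ) 1,
      |logit (g s) - logit (g t)| = |logit s - logit t|)
    {s₀ t₀ : ℝ} (hs₀ : s₀ ∈ Ioo 0 1) (ht₀ : t₀ ∈ Ioo 0 1) (hst : s₀ < t₀) (hgst : g s₀ < g t₀) :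
    ∃ k : ℝ, 0 < k ∧ ∀ t ∈ Ioo (0 : ℝ) 1, g t = t * k / (1 - t + t * k) := by
  refine ⟨Real.exp (logit (g s₀) - logit s₀), Real.exp_pos _, fun t ht => ?_⟩
  refine eq_div_of_logit_eq_logit_add_log (hg ht) ht (Real.exp_pos _) ?_
  have := sub_eq_sub_of_abs_sub_eq_abs_sub (logit_strictMonoOn hs₀ ht₀ hst)
    (logit_strictMonoOn (hg hs₀) (hg ht₀) hgst) (hiso _ ht₀ _ hs₀) (hiso _ ht _ hs₀)
    (hiso _ ht _ ht₀)
  rw [Real.log_exp]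
  linarith

section Affine

variable {E F : Type*} [AddCommGroup E] [Module ℝ E] [AddCommGroup F] [Module ℝ F]

lemma lineThrough_eq_affineSpan (x y : E) : OrderUnitSpace.lineThrough x y = line[ℝ, x, y] := by
  ext z
  rw [SetLike.mem_coe, mem_affineSpan_pair_iff_exists_lineMap_eq]
  simp only [OrderUnitSpace.lineThrough, lineMap_apply_module', mem_ofPred_eq]
  exact exists_congr fun t => by rw [eq_comm, add_comm]

lemma mem_affineSpan_of_image_segment_subset {f : E → F} {A : Set E}
    (hf : ∀ p ∈ A, ∀ q ∈ A, f '' segment ℝ p q ⊆ segment ℝ (f p) (f q)) {x y z : E}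
    (hx : x ∈ A) (hy : y ∈ A) (hz : z ∈ A) (hcol : Collinear ℝ {x, y, z}) (hne : f x ≠ f y) :
    f z ∈ line[ℝ, f x, f y] := by
  have key : ∀ {p q r}, p ∈ A → q ∈ A → r ∈ A → Wbtw ℝ p q r → Collinear ℝ {f p, f q, f r} :=
    fun hp _ hr h => (mem_segment_iff_wbtw.mp
      (hf _ hp _ hr ⟨_, mem_segment_iff_wbtw.mpr h, rfl⟩)).collinear
  have hcol' : Collinear ℝ {f x, f y, f z} := by
    rcases hcol.wbtw_or_wbtw_or_wbtw with h | h | h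
    · exact key hx hy hz h
    · convert key hy hz hx h using 1
      ext; simp only [mem_insert_iff, mem_singleton_iff]; tauto
    · convert key hz hx hy h using 1
      ext; simp only [mem_insert_iff, mem_singleton_iff]; tauto
  exact hcol'.mem_affineSpan_of_mem_of_ne (by simp) (by simp) (by simp) hne

lemma lt_of_lineMap_mem_openSegment {a b : E} (hab : a ≠ b) {s t : ℝ} (ht : 0 < t)
    (h : lineMap a b s ∈ openSegment ℝ a (lineMap a b t)) : s < t := by
  obtain ⟨r, ⟨-, hr⟩, hrs⟩ := (openSegment_eq_image_lineMap ℝ _ _).subset h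
  rw [lineMap_lineMap_right] at hrs
  have := lineMap_injective ℝ hab hrs
  nlinarith

lemma exists_linearMap_span_pair {a b : E} (hab : LinearIndependent ℝ ![a, b]) (c d : F) :
    ∃ T : Submodule.span ℝ {a, b} →ₗ[ℝ] F,
      ∀ z : Submodule.span ℝ {a, b}, ∀ α β : ℝ, (z : E) = α • a + β • b → T z = α • c + β • d := by
  have hspan : Submodule.span ℝ (range ![a, b]) = Submodule.span ℝ {a, b} := by
    rw [Matrix.range_cons_cons_empty]
  let B := (Module.Basis.span hab).map (LinearEquiv.ofEq _ _ hspan)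
  refine ⟨B.constr ℝ ![c, d], fun z α β hz => ?_⟩
  have : z = α • B 0 + β • B 1 := by
    ext
    simp [B, hz]
  simp [this]

lemma inv_apply_smul_eq_lineMap (φ : F →ₗ[ℝ] ℝ) {c d : F} (hc : φ c = 1) (hd : φ d = 1)
    {t k : ℝ} (hD : 1 - t + t * k ≠ 0) :
    (φ ((1 - t) • c + t • k • d))⁻¹ • ((1 - t) • c + t • k • d) =
      lineMap c d (t * k / (1 - t + t * k)) := by
  rw [lineMap_apply_module]
  simp only [map_add, map_smul, hc, hd, smul_eq_mul, mul_one]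
  match_scalars <;> field_simp; ring

end Affine

namespace OrderUnitSpace

variable {X : Type*} [AddCommGroup X] [Module ℝ X] (S : OrderUnitSpace X)

lemma add_mem {a b : X} (ha : a ∈ S.C) (hb : b ∈ S.C) : a + b ∈ S.C := by
  convert S.smul_mem zero_le_two
    (S.convex ha hb (by norm_num : (0 : ℝ) ≤ 1 / 2) (by norm_num : (0 : ℝ) ≤ 1 / 2) (by norm_num))
    using 1
  module

lemma smul_u_add_mem {c c' : ℝ} (hcc' : c ≤ c') {v : X} (h : c • S.u + v ∈ S.C) :
    c' • S.u + v ∈ S.C := by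
  convert S.add_mem h (S.smul_mem (sub_nonneg.mpr hcc') S.u_mem) using 1
  module

lemma smul_u_sub_mem_and_add_mem_of_onorm_lt {v : X} {ε : ℝ} (h : S.onorm v < ε) :
    ε • S.u - v ∈ S.C ∧ ε • S.u + v ∈ S.C := by
  obtain ⟨c₁, hc₁, h₁⟩ := S.orderUnit v
  obtain ⟨c₂, hc₂, h₂⟩ := S.orderUnit (-v)
  rw [sub_eq_add_neg] at h₁ ⊢
  rw [sub_neg_eq_add] at h₂
  have hne : {c : ℝ | 0 < c ∧ c • S.u - v ∈ S.C ∧ c • S.u + v ∈ S.C}.Nonempty := by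
    refine ⟨c₁ + c₂, by positivity, ?_, ?_⟩
    · rw [sub_eq_add_neg]
      exact S.smul_u_add_mem (le_add_of_nonneg_right hc₂.le) h₁
    · exact S.smul_u_add_mem (le_add_of_nonneg_left hc₁.le) h₂
  obtain ⟨c, ⟨-, hc₁, hc₂⟩, hcε⟩ := exists_lt_of_csInf_lt hne h
  rw [sub_eq_add_neg] at hc₁
  exact ⟨S.smul_u_add_mem hcε.le hc₁, S.smul_u_add_mem hcε.le hc₂⟩

lemma onorm_le {v : X} {c : ℝ} (hc : 0 < c) (h₁ : c • S.u - v ∈ S.C)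
    (h₂ : c • S.u + v ∈ S.C) : S.onorm v ≤ c :=
  csInf_le ⟨0, fun _ hc => hc.1.le⟩ ⟨hc, h₁, h₂⟩

/-- The Archimedean axiom makes `C` closed for the order unit norm. -/
lemma mem_C_of_forall_onorm_lt {z : X} (h : ∀ ε > 0, ∃ w ∈ S.C, S.onorm (w - z) < ε) :
    z ∈ S.C := by
  have key : ∀ ε : ℝ, 0 < ε → z + ε • S.u ∈ S.C := fun ε hε => by
    obtain ⟨w, hw, hwz⟩ := h ε hε
    convert S.add_mem hw (S.smul_u_sub_mem_and_add_mem_of_onorm_lt hwz).1 using 1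
    abel
  have := S.archimedean (-z) S.u S.u_mem fun n hn => by
    have hn' : (0 : ℝ) < n := Nat.cast_pos.mpr hn
    convert S.smul_mem hn'.le (key (n : ℝ)⁻¹ (inv_pos.mpr hn')) using 1
    match_scalars <;> field_simp
  rwa [neg_neg] at this

lemma interiorC_subset_C : S.interiorC ⊆ S.C := by
  rintro x ⟨ε, hε, hball⟩
  refine hball x ((S.onorm_le (half_pos hε) ?_ ?_).trans_lt (half_lt_self hε)) <;>
    simpa using S.smul_mem (half_pos hε).le S.u_mem

lemma smul_add_mem_interiorC {p q : X} (hp : p ∈ S.interiorC) (hq : q ∈ S.C) {r : ℝ}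
    (hr : 0 < r) : r • p + q ∈ S.interiorC := by
  obtain ⟨ε, hε, hball⟩ := hp
  refine ⟨r * ε / 2, by positivity, fun y hy => ?_⟩
  obtain ⟨h₁, h₂⟩ := S.smul_u_sub_mem_and_add_mem_of_onorm_lt hy
  have hyq : r⁻¹ • (y - q) ∈ S.C := by
    refine hball _ ((S.onorm_le (half_pos hε) ?_ ?_).trans_lt (half_lt_self hε))
    · convert S.smul_mem (inv_nonneg.mpr hr.le) h₁ using 1
      match_scalars <;> field_simp
    · convert S.smul_mem (inv_nonneg.mpr hr.le) h₂ using 1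
      match_scalars <;> field_simp
  convert S.add_mem (S.smul_mem hr.le hyq) hq using 1
  match_scalars <;> field_simp; ring

variable {S} {φ : X →ₗ[ℝ] ℝ}

lemma apply_nonneg (hpos : S.StrictlyPos φ) {v : X} (hv : v ∈ S.C) : 0 ≤ φ v := by
  rcases eq_or_ne v 0 with rfl | hv0
  · simp
  · exact (hpos v hv hv0).le

lemma abs_apply_le_of_onorm_lt (hpos : S.StrictlyPos φ) {v : X} {ε : ℝ}
    (h : S.onorm v < ε) : |φ v| ≤ ε * φ S.u := by
  obtain ⟨h₁, h₂⟩ := S.smul_u_sub_mem_and_add_mem_of_onorm_lt h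
  have e₁ := apply_nonneg hpos h₁
  have e₂ := apply_nonneg hpos h₂
  simp only [map_sub, map_add, map_smul, smul_eq_mul] at e₁ e₂
  exact abs_le.mpr ⟨by linarith, by linarith⟩

lemma mem_C_of_mem_relBoundary {z : X} (hz : z ∈ S.relBoundary φ) : z ∈ S.C :=
  S.mem_C_of_forall_onorm_lt fun ε hε => by
    obtain ⟨w, hw, hwz⟩ := hz.1 ε hε
    exact ⟨w, S.interiorC_subset_C hw.1, hwz⟩

lemma apply_eq_one_of_mem_relBoundary (hpos : S.StrictlyPos φ) {z : X}
    (hz : z ∈ S.relBoundary φ) : φ z = 1 := by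
  have hu := apply_nonneg hpos S.u_mem
  refine eq_of_forall_dist_le fun ε hε => ?_
  obtain ⟨w, ⟨-, hw⟩, hwz⟩ := hz.1 (ε / (φ S.u + 1)) (by positivity)
  have := abs_apply_le_of_onorm_lt hpos hwz
  rw [map_sub, hw, ← abs_sub_comm, div_mul_eq_mul_div, le_div_iff₀ (by positivity)] at this
  rw [Real.dist_eq]
  nlinarith [abs_nonneg (φ z - 1)]

lemma notMem_interiorC_of_mem_relBoundary (hpos : S.StrictlyPos φ) {z : X}
    (hz : z ∈ S.relBoundary φ) : z ∉ S.interiorC :=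
  fun hzi => hz.2 ⟨hzi, apply_eq_one_of_mem_relBoundary hpos hz⟩

variable (S) in
def IsQuadrant (a b : X) : Prop := ∀ α β : ℝ, α • a + β • b ∈ S.C ↔ 0 ≤ α ∧ 0 ≤ β

/-- If `v = α a + β b` with `β < 0` were in the cone, then `a` would be a positive combination
of the interior point `s a + t b` and of `v`, hence interior. -/
lemma nonneg_of_smul_add_smul_mem_C (hpos : S.StrictlyPos φ) {a b : X} (ha : φ a = 1)
    (hb : φ b = 1) (ha' : a ∉ S.interiorC) {s t : ℝ} (hs : 0 ≤ s) (ht : 0 < t)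
    (hp : s • a + t • b ∈ S.interiorC) {α β : ℝ} (hv : α • a + β • b ∈ S.C) : 0 ≤ β := by
  by_contra! hβ
  have hα : 0 < α := by
    have := apply_nonneg hpos hv
    simp only [map_add, map_smul, ha, hb, smul_eq_mul, mul_one] at this
    linarith
  have hc : 0 < t * α - β * s := by nlinarith
  apply ha'
  convert S.smul_add_mem_interiorC hp (S.smul_mem (div_pos ht hc).le hv)
    (div_pos (neg_pos.mpr hβ) hc) using 1
  match_scalars <;> field_simp [hc.ne'] <;> ring

lemma isQuadrant_of_mem_relBoundary (hpos : S.StrictlyPos φ) {a b p : X}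
    (ha : a ∈ S.relBoundary φ) (hb : b ∈ S.relBoundary φ) (hp : p ∈ openSegment ℝ a b)
    (hpi : p ∈ S.interiorC) : S.IsQuadrant a b := by
  obtain ⟨s, t, hs, ht, -, rfl⟩ := hp
  have ha₁ := apply_eq_one_of_mem_relBoundary hpos ha
  have hb₁ := apply_eq_one_of_mem_relBoundary hpos hb
  refine fun α β => ⟨fun hv => ⟨?_, ?_⟩, fun ⟨hα, hβ⟩ => ?_⟩
  · rw [add_comm] at hv hpi
    exact nonneg_of_smul_add_smul_mem_C hpos hb₁ ha₁
      (notMem_interiorC_of_mem_relBoundary hpos hb) ht.le hs hpi hv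
  · exact nonneg_of_smul_add_smul_mem_C hpos ha₁ hb₁
      (notMem_interiorC_of_mem_relBoundary hpos ha) hs.le ht hpi hv
  · exact S.add_mem (S.smul_mem hα (mem_C_of_mem_relBoundary ha))
      (S.smul_mem hβ (mem_C_of_mem_relBoundary hb))

lemma IsQuadrant.ne {a b : X} (h : S.IsQuadrant a b) : a ≠ b := by
  rintro rfl
  have := (h 1 (-1)).mp (by simpa using S.smul_mem le_rfl S.u_mem)
  linarith [this.2]

lemma IsQuadrant.linearIndependent {a b : X} (h : S.IsQuadrant a b) :
    LinearIndependent ℝ ![a, b] := by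
  refine LinearIndependent.pair_iff.mpr fun α β hαβ => ?_
  have h0 : (0 : X) ∈ S.C := by simpa using S.smul_mem le_rfl S.u_mem
  have h₁ := (h α β).mp (hαβ ▸ h0)
  have h₂ := (h (-α) (-β)).mp (by rwa [neg_smul, neg_smul, ← neg_add, hαβ, neg_zero])
  exact ⟨by linarith [h₁.1, h₂.1], by linarith [h₁.2, h₂.2]⟩

lemma M_smul_add_smul {a b : X} (h : S.IsQuadrant a b) {α β γ δ : ℝ} (hα : 0 < α) (hγ : 0 < γ)
    (hδ : 0 < δ) :
    S.M (α • a + β • b) (γ • a + δ • b) = max (α / γ) (β / δ) := by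
  have hset : {c : ℝ | 0 < c ∧ c • (γ • a + δ • b) - (α • a + β • b) ∈ S.C} =
      Ici (max (α / γ) (β / δ)) := by
    ext c
    have e : c • (γ • a + δ • b) - (α • a + β • b) = (c * γ - α) • a + (c * δ - β) • b := by
      module
    rw [mem_ofPred_eq, mem_Ici, e, h, max_le_iff, div_le_iff₀ hγ, div_le_iff₀ hδ, sub_nonneg,
      sub_nonneg]
    constructor
    · rintro ⟨-, h₁, h₂⟩
      exact ⟨by linarith, by linarith⟩
    · rintro ⟨h₁, h₂⟩
      exact ⟨by nlinarith, by linarith, by linarith⟩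
  rw [M, hset, csInf_Ici]

lemma dH_smul_add_smul {a b : X} (h : S.IsQuadrant a b) {α β γ δ : ℝ} (hα : 0 < α) (hβ : 0 < β)
    (hγ : 0 < γ) (hδ : 0 < δ) :
    S.dH (α • a + β • b) (γ • a + δ • b) = |Real.log (α / γ) - Real.log (β / δ)| := by
  rw [dH, M_smul_add_smul h hα hγ hδ, M_smul_add_smul h hγ hα hβ, ← inv_div α γ, ← inv_div β δ,
    log_max_mul_max_inv (by positivity) (by positivity)]

lemma dH_lineMap {a b : X} (h : S.IsQuadrant a b) {s t : ℝ} (hs : s ∈ Ioo 0 1)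
    (ht : t ∈ Ioo 0 1) : S.dH (lineMap a b s) (lineMap a b t) = |logit s - logit t| := by
  obtain ⟨hs₀, hs₁⟩ := hs
  obtain ⟨ht₀, ht₁⟩ := ht
  have hs' : 0 < 1 - s := sub_pos.mpr hs₁
  have ht' : 0 < 1 - t := sub_pos.mpr ht₁
  rw [lineMap_apply_module, lineMap_apply_module, dH_smul_add_smul h hs' hs₀ ht' ht₀,
    ← abs_neg, logit, logit]
  simp only [Real.log_div hs₀.ne' hs'.ne', Real.log_div ht₀.ne' ht'.ne',
    Real.log_div hs'.ne' ht'.ne', Real.log_div hs₀.ne' ht₀.ne']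
  ring_nf

variable {X₁ X₂ : Type*} [AddCommGroup X₁] [Module ℝ X₁] [AddCommGroup X₂] [Module ℝ X₂]
  {S₁ : OrderUnitSpace X₁} {S₂ : OrderUnitSpace X₂} {φ₁ : X₁ →ₗ[ℝ] ℝ} {φ₂ : X₂ →ₗ[ℝ] ℝ}
  {f : X₁ → X₂}

lemma mapsTo_openSegment (hmaps : MapsTo f (S₁.Sig φ₁) (S₂.Sig φ₂))
    (hseg : ∀ p ∈ S₁.Sig φ₁, ∀ q ∈ S₁.Sig φ₁, f '' segment ℝ p q ⊆ segment ℝ (f p) (f q))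
    {x' y' x y : X₁} {fx' fy' : X₂} (hSig : openSegment ℝ x' y' ⊆ S₁.Sig φ₁)
    (hx : x ∈ openSegment ℝ x' y') (hy : y ∈ openSegment ℝ x' y')
    (hfends : lineThrough (f x) (f y) ∩ S₂.Sig φ₂ ⊆ openSegment ℝ fx' fy') (hfxy : f x ≠ f y) :
    MapsTo f (openSegment ℝ x' y') (openSegment ℝ fx' fy') := by
  have hline : openSegment ℝ x' y' ⊆ line[ℝ, x', y'] := fun w hw =>
    (mem_segment_iff_wbtw.mp (openSegment_subset_segment ℝ _ _ hw)).mem_affineSpan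
  refine fun z hz => hfends ⟨?_, hmaps (hSig hz)⟩
  rw [lineThrough_eq_affineSpan]
  exact mem_affineSpan_of_image_segment_subset hseg (hSig hx) (hSig hy) (hSig hz)
    (collinear_triple_of_mem_affineSpan_pair (hline hx) (hline hy) (hline hz)) hfxy

lemma exists_pos_map_lineMap_eq
    (hiso : ∀ p ∈ S₁.Sig φ₁, ∀ q ∈ S₁.Sig φ₁, S₂.dH (f p) (f q) = S₁.dH p q)
    {x' y' : X₁} {fx' fy' : X₂} (hq₁ : S₁.IsQuadrant x' y') (hq₂ : S₂.IsQuadrant fx' fy')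
    (hSig : openSegment ℝ x' y' ⊆ S₁.Sig φ₁)
    (hf : MapsTo f (openSegment ℝ x' y') (openSegment ℝ fx' fy'))
    {x y : X₁} (hx : x ∈ openSegment ℝ x' y') (hy : y ∈ openSegment ℝ x' y')
    (hxbtw : x ∈ openSegment ℝ x' y) (hfxbtw : f x ∈ openSegment ℝ fx' (f y)) :
    ∃ k : ℝ, 0 < k ∧ ∀ t ∈ Ioo (0 : ℝ) 1,
      f (lineMap x' y' t) = lineMap fx' fy' (t * k / (1 - t + t * k)) := by
  have hP : ∀ t ∈ Ioo (0 : ℝ) 1, lineMap x' y' t ∈ openSegment ℝ x' y' := fun t ht => by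
    rw [openSegment_eq_image_lineMap]
    exact mem_image_of_mem _ ht
  obtain ⟨g, hgI, hg⟩ : ∃ g : ℝ → ℝ, MapsTo g (Ioo 0 1) (Ioo 0 1) ∧
      ∀ t ∈ Ioo (0 : ℝ) 1, lineMap fx' fy' (g t) = f (lineMap x' y' t) := by
    have := fun t (ht : t ∈ Ioo (0 : ℝ) 1) =>
      (openSegment_eq_image_lineMap ℝ fx' fy').subset (hf (hP t ht))
    choose! g hgI hg using this
    exact ⟨g, hgI, hg⟩
  obtain ⟨s₀, hs₀, rfl⟩ := (openSegment_eq_image_lineMap ℝ x' y').subset hx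
  obtain ⟨t₀, ht₀, rfl⟩ := (openSegment_eq_image_lineMap ℝ x' y').subset hy
  rw [← hg s₀ hs₀, ← hg t₀ ht₀] at hfxbtw
  obtain ⟨k, hk, hgk⟩ := exists_pos_eq_div_of_isometry_logit hgI
    (fun s hs t ht => by
      rw [← dH_lineMap hq₂ (hgI hs) (hgI ht), hg s hs, hg t ht,
        hiso _ (hSig (hP s hs)) _ (hSig (hP t ht)), dH_lineMap hq₁ hs ht])
    hs₀ ht₀ (lt_of_lineMap_mem_openSegment hq₁.ne ht₀.1 hxbtw)
    (lt_of_lineMap_mem_openSegment hq₂.ne (hgI ht₀).1 hfxbtw)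
  exact ⟨k, hk, fun t ht => by rw [← hg t ht, hgk t ht]⟩

lemma exists_linearMap_of_map_lineMap_eq {x' y' : X₁} {fx' fy' : X₂}
    (hq₁ : S₁.IsQuadrant x' y') (hq₂ : S₂.IsQuadrant fx' fy') (hfx' : φ₂ fx' = 1)
    (hfy' : φ₂ fy' = 1) {k : ℝ} (hk : 0 < k)
    (hf : ∀ t ∈ Ioo (0 : ℝ) 1, f (lineMap x' y' t) = lineMap fx' fy' (t * k / (1 - t + t * k))) :
    ∃ S : ↥(Submodule.span ℝ ({x', y'} : Set X₁)) →ₗ[ℝ] X₂,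
      (∀ z : ↥(Submodule.span ℝ ({x', y'} : Set X₁)),
        S z ∈ Submodule.span ℝ ({fx', fy'} : Set X₂)) ∧
      (∀ z : ↥(Submodule.span ℝ ({x', y'} : Set X₁)), S z ∈ S₂.C ↔ (z : X₁) ∈ S₁.C) ∧
      (∀ hx' : x' ∈ Submodule.span ℝ ({x', y'} : Set X₁),
        (φ₂ (S ⟨x', hx'⟩))⁻¹ • S ⟨x', hx'⟩ = fx') ∧
      (∀ hy' : y' ∈ Submodule.span ℝ ({x', y'} : Set X₁),
        (φ₂ (S ⟨y', hy'⟩))⁻¹ • S ⟨y', hy'⟩ = fy') ∧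
      (∀ z : X₁, ∀ hz : z ∈ Submodule.span ℝ ({x', y'} : Set X₁),
        z ∈ openSegment ℝ x' y' → (φ₂ (S ⟨z, hz⟩))⁻¹ • S ⟨z, hz⟩ = f z) := by
  obtain ⟨T, hT⟩ := exists_linearMap_span_pair hq₁.linearIndependent fx' (k • fy')
  refine ⟨T, fun z => ?_, fun z => ?_, fun hx' => ?_, fun hy' => ?_, fun z hz hzs => ?_⟩
  · obtain ⟨α, β, hz⟩ := Submodule.mem_span_pair.mp z.2
    rw [hT z α β hz.symm, smul_smul]
    exact Submodule.mem_span_pair.mpr ⟨α, β * k, rfl⟩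
  · obtain ⟨α, β, hz⟩ := Submodule.mem_span_pair.mp z.2
    rw [hT z α β hz.symm, ← hz, smul_smul, hq₂, hq₁, mul_nonneg_iff_of_pos_right hk]
  · rw [hT _ 1 0 (by simp)]
    simp [hfx']
  · rw [hT _ 0 1 (by simp)]
    simp [hfy', hk.ne']
  · obtain ⟨t, ht, rfl⟩ := (openSegment_eq_image_lineMap ℝ x' y').subset hzs
    rw [hT _ (1 - t) t (lineMap_apply_module _ _ _), hf t ht,
      inv_apply_smul_eq_lineMap φ₂ hfx' hfy' (by nlinarith [ht.1, ht.2])]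

end OrderUnitSpace

open OrderUnitSpace

theorem two_dimensional_linear_map_on_span_general
    {X₁ : Type*} [AddCommGroup X₁] [Module ℝ X₁]
    {X₂ : Type*} [AddCommGroup X₂] [Module ℝ X₂]
    (S₁ : OrderUnitSpace X₁) (S₂ : OrderUnitSpace X₂)
    (φ₁ : X₁ →ₗ[ℝ] ℝ) (φ₂ : X₂ →ₗ[ℝ] ℝ)
    (hpos₁ : S₁.StrictlyPos φ₁)
    (hpos₂ : S₂.StrictlyPos φ₂)
    (f : X₁ → X₂) (hmaps : Set.MapsTo f (S₁.Sig φ₁) (S₂.Sig φ₂))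
    (hiso : ∀ x ∈ S₁.Sig φ₁, ∀ y ∈ S₁.Sig φ₁, S₂.dH (f x) (f y) = S₁.dH x y)
    (hseg : ∀ x ∈ S₁.Sig φ₁, ∀ y ∈ S₁.Sig φ₁,
      f '' segment ℝ x y = segment ℝ (f x) (f y))
    (x y : X₁) (hx : x ∈ S₁.Sig φ₁) (hy : y ∈ S₁.Sig φ₁)
    (x' y' : X₁)
    (hx'bd : x' ∈ S₁.relBoundary φ₁) (hy'bd : y' ∈ S₁.relBoundary φ₁)
    (hends : lineThrough x y ∩ S₁.Sig φ₁ = openSegment ℝ x' y')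
    (hxbtw : x ∈ openSegment ℝ x' y)
    (fx' fy' : X₂)
    (hfx'bd : fx' ∈ S₂.relBoundary φ₂) (hfy'bd : fy' ∈ S₂.relBoundary φ₂)
    (hfends : lineThrough (f x) (f y) ∩ S₂.Sig φ₂ = openSegment ℝ fx' fy')
    (hfxbtw : f x ∈ openSegment ℝ fx' (f y)) :
    ∃ S : ↥(Submodule.span ℝ ({x', y'} : Set X₁)) →ₗ[ℝ] X₂,
      (∀ z : ↥(Submodule.span ℝ ({x', y'} : Set X₁)),
        S z ∈ Submodule.span ℝ ({fx', fy'} : Set X₂)) ∧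
      (∀ z : ↥(Submodule.span ℝ ({x', y'} : Set X₁)), S z ∈ S₂.C ↔ (z : X₁) ∈ S₁.C) ∧
      (∀ hx' : x' ∈ Submodule.span ℝ ({x', y'} : Set X₁),
        (φ₂ (S ⟨x', hx'⟩))⁻¹ • S ⟨x', hx'⟩ = fx') ∧
      (∀ hy' : y' ∈ Submodule.span ℝ ({x', y'} : Set X₁),
        (φ₂ (S ⟨y', hy'⟩))⁻¹ • S ⟨y', hy'⟩ = fy') ∧
      (∀ z : X₁, ∀ hz : z ∈ Submodule.span ℝ ({x', y'} : Set X₁),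
        z ∈ openSegment ℝ x' y' → (φ₂ (S ⟨z, hz⟩))⁻¹ • S ⟨z, hz⟩ = f z) := by
  have hSig : openSegment ℝ x' y' ⊆ S₁.Sig φ₁ := hends ▸ inter_subset_right
  have hxs : x ∈ openSegment ℝ x' y' := hends ▸ ⟨⟨0, by simp⟩, hx⟩
  have hys : y ∈ openSegment ℝ x' y' := hends ▸ ⟨⟨1, by simp⟩, hy⟩
  have hfxs : f x ∈ openSegment ℝ fx' fy' := hfends ▸ ⟨⟨0, by simp⟩, hmaps hx⟩
  have hq₁ := isQuadrant_of_mem_relBoundary hpos₁ hx'bd hy'bd hxs hx.1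
  have hq₂ := isQuadrant_of_mem_relBoundary hpos₂ hfx'bd hfy'bd hfxs (hmaps hx).1
  have hfxy : f x ≠ f y := fun h =>
    hfx'bd.2 (right_mem_openSegment_iff.mp (h ▸ hfxbtw) ▸ hmaps hy)
  have hf := mapsTo_openSegment hmaps (fun p hp q hq => (hseg p hp q hq).le) hSig hxs hys
    hfends.le hfxy
  obtain ⟨k, hk, hfk⟩ := exists_pos_map_lineMap_eq hiso hq₁ hq₂ hSig hf hxs hys hxbtw hfxbtw
  exact exists_linearMap_of_map_lineMap_eq hq₁ hq₂ (apply_eq_one_of_mem_relBoundary hpos₂ hfx'bd)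
    (apply_eq_one_of_mem_relBoundary hpos₂ hfy'bd) hk hfk

/-- Let `x ≠ y` in `Σ₁` with `x', y'` the endpoints of
`ℓ_{xy} ∩ Σ₁` in the relative boundary (`x` between `x'` and `y`, `y` between `y'`
and `x`), let `f` be an isometry mapping line segments to line segments, and let
`fx', fy'` be the corresponding endpoints of `ℓ_{f(x) f(y)} ∩ Σ₂`. Then there is a
linear map `S : Span{x', y'} → Span{fx', fy'}` which is bi-positive with respect to
`C₁ ∩ Span{x', y'}` and `C₂ ∩ Span{fx', fy'}`, with `[S x'] = fx'`, `[S y'] = fy'`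
and `[S z] = f z` for all `z` in the open segment `(x', y')`. -/
theorem two_dimensional_linear_map_on_span
    {X₁ : Type*} [AddCommGroup X₁] [Module ℝ X₁]
    {X₂ : Type*} [AddCommGroup X₂] [Module ℝ X₂]
    (S₁ : OrderUnitSpace X₁) (S₂ : OrderUnitSpace X₂)
    (φ₁ : X₁ →ₗ[ℝ] ℝ) (φ₂ : X₂ →ₗ[ℝ] ℝ)
    (hstate₁ : S₁.IsState φ₁) (hpos₁ : S₁.StrictlyPos φ₁)
    (hstate₂ : S₂.IsState φ₂) (hpos₂ : S₂.StrictlyPos φ₂)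
    (f : X₁ → X₂) (hmaps : Set.MapsTo f (S₁.Sig φ₁) (S₂.Sig φ₂))
    (hiso : ∀ x ∈ S₁.Sig φ₁, ∀ y ∈ S₁.Sig φ₁, S₂.dH (f x) (f y) = S₁.dH x y)
    (hseg : ∀ x ∈ S₁.Sig φ₁, ∀ y ∈ S₁.Sig φ₁,
      f '' segment ℝ x y = segment ℝ (f x) (f y))
    (x y : X₁) (hx : x ∈ S₁.Sig φ₁) (hy : y ∈ S₁.Sig φ₁) (hxy : x ≠ y)
    (x' y' : X₁)
    (hx'bd : x' ∈ S₁.relBoundary φ₁) (hy'bd : y' ∈ S₁.relBoundary φ₁)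
    (hends : lineThrough x y ∩ S₁.Sig φ₁ = openSegment ℝ x' y')
    (hxbtw : x ∈ openSegment ℝ x' y) (hybtw : y ∈ openSegment ℝ y' x)
    (fx' fy' : X₂)
    (hfx'bd : fx' ∈ S₂.relBoundary φ₂) (hfy'bd : fy' ∈ S₂.relBoundary φ₂)
    (hfends : lineThrough (f x) (f y) ∩ S₂.Sig φ₂ = openSegment ℝ fx' fy')
    (hfxbtw : f x ∈ openSegment ℝ fx' (f y)) (hfybtw : f y ∈ openSegment ℝ fy' (f x)) :
    ∃ S : ↥(Submodule.span ℝ ({x', y'} : Set X₁)) →ₗ[ℝ] X₂,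
      (∀ z : ↥(Submodule.span ℝ ({x', y'} : Set X₁)),
        S z ∈ Submodule.span ℝ ({fx', fy'} : Set X₂)) ∧
      (∀ z : ↥(Submodule.span ℝ ({x', y'} : Set X₁)), S z ∈ S₂.C ↔ (z : X₁) ∈ S₁.C) ∧
      (∀ hx' : x' ∈ Submodule.span ℝ ({x', y'} : Set X₁),
        (φ₂ (S ⟨x', hx'⟩))⁻¹ • S ⟨x', hx'⟩ = fx') ∧
      (∀ hy' : y' ∈ Submodule.span ℝ ({x', y'} : Set X₁),
        (φ₂ (S ⟨y', hy'⟩))⁻¹ • S ⟨y', hy'⟩ = fy') ∧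
      (∀ z : X₁, ∀ hz : z ∈ Submodule.span ℝ ({x', y'} : Set X₁),
        z ∈ openSegment ℝ x' y' → (φ₂ (S ⟨z, hz⟩))⁻¹ • S ⟨z, hz⟩ = f z) :=
  two_dimensional_linear_map_on_span_general S₁ S₂ φ₁ φ₂ hpos₁ hpos₂ f hmaps hiso hseg x y hx hy x'
    y' hx'bd hy'bd hends hxbtw fx' fy' hfx'bd hfy'bd hfends hfxbtw

end HilbertGeom
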